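/- Let d ≥ 1, let Ω ⊆ ℝ^d be open and convex, and let K₁, …, K_N be finitely many closed convex subsets of ℝ^d with Ω ⊆ K₁ ∪ ⋯ ∪ K_N. Let f : Ω → ℝ be continuously differentiable on Ω and suppose that for each i the restriction of f to Ω ∩ K_i is convex (f is piecewise convex). Then f is convex on Ω. -/

import Mathlib

/-!
Along a segment of `Ω`, `f` becomes a `C¹` function of one real variable which is convex on
each of finitely many closed pieces, so its derivative is monotone on each piece. Near a point
`x` only the pieces through `x` are met, so by real induction the continuous derivative is
monotone on the whole segment, and the restriction of `f` is convex.
-/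

open Set Filter Topology

theorem monotoneOn_of_isClosed_cover {α β ι : Type*} [ConditionallyCompleteLinearOrder α]
    [TopologicalSpace α] [OrderTopology α] [DenselyOrdered α] [LinearOrder β]
    [TopologicalSpace β] [OrderClosedTopology β] [Finite ι] {f : α → β} {s : Set α}
    {C : ι → Set α} (hs : s.OrdConnected) (hf : ContinuousOn f s) (hC : ∀ i, IsClosed (C i))
    (hcover : s ⊆ ⋃ i, C i) (hmono : ∀ i, MonotoneOn f (s ∩ C i)) : MonotoneOn f s := by
  intro a ha b hb hab
  have hIcc : Icc a b ⊆ s := hs.out ha hb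
  suffices Icc a b ⊆ {u | f a ≤ f u} from this ⟨hab, le_rfl⟩
  refine IsClosed.Icc_subset_of_forall_mem_nhdsWithin ?_ le_rfl ?_
  · rw [inter_comm]
    exact (hf.mono hIcc).preimage_isClosed_of_isClosed isClosed_Icc isClosed_Ici
  rintro x ⟨hfx, hx⟩
  have hxs : x ∈ s := hIcc (Ico_subset_Icc_self hx)
  -- only the pieces through `x` are met near `x`, the others being closed and finitely many
  filter_upwards [nhdsWithin_le_nhds ((locallyFinite_of_finite C).eventually_subset hC x),
    Ioo_mem_nhdsGT hx.2] with y hyC hy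
  have hys : y ∈ s := hIcc ⟨hx.1.trans hy.1.le, hy.2.le⟩
  obtain ⟨i, hi⟩ := mem_iUnion.1 (hcover hys)
  exact hfx.trans (hmono i ⟨hxs, hyC hi⟩ ⟨hys, hi⟩ hy.1.le)

theorem convexOn_real_of_isClosed_cover {ι : Type*} [Finite ι] {U : Set ℝ} {g : ℝ → ℝ}
    {C : ι → Set ℝ} (hU : IsOpen U) (hUc : Convex ℝ U) (hg : ContDiffOn ℝ 1 g U)
    (hC : ∀ i, IsClosed (C i)) (hcover : U ⊆ ⋃ i, C i) (hconv : ∀ i, ConvexOn ℝ (U ∩ C i) g) :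
    ConvexOn ℝ U g := by
  have hdiff : DifferentiableOn ℝ g U := hg.differentiableOn one_ne_zero
  refine MonotoneOn.convexOn_of_deriv hUc hg.continuousOn ?_ ?_ <;> rw [hU.interior_eq]
  · exact hdiff
  exact monotoneOn_of_isClosed_cover hUc.ordConnected (hg.continuousOn_deriv_of_isOpen hU le_rfl)
    hC hcover fun i ↦ (hconv i).monotoneOn_deriv fun x hx ↦ hdiff.differentiableAt (hU.mem_nhds hx.1)

theorem convexOn_of_forall_convexOn_lineMap {𝕜 E β : Type*} [Field 𝕜] [LinearOrder 𝕜]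
    [IsStrictOrderedRing 𝕜] [AddCommGroup E] [Module 𝕜 E] [AddCommMonoid β] [PartialOrder β]
    [SMul 𝕜 β] {s : Set E} {f : E → β} (hs : Convex 𝕜 s)
    (h : ∀ x ∈ s, ∀ y ∈ s, ConvexOn 𝕜 ((AffineMap.lineMap x y : 𝕜 →ᵃ[𝕜] E) ⁻¹' s)
      (f ∘ AffineMap.lineMap x y)) :
    ConvexOn 𝕜 s f := by
  refine ⟨hs, fun x hx y hy a b ha hb hab ↦ ?_⟩
  have := (h x hx y hy).2 (show (0 : 𝕜) ∈ _ by simpa) (show (1 : 𝕜) ∈ _ by simpa) ha hb hab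
  rw [eq_sub_of_add_eq hab] at this ⊢
  simpa [AffineMap.lineMap_apply_module] using this

theorem convexOn_of_isClosed_cover {ι E : Type*} [Finite ι] [NormedAddCommGroup E]
    [NormedSpace ℝ E] {Ω : Set E} {f : E → ℝ} {C : ι → Set E} (hΩ : IsOpen Ω)
    (hΩc : Convex ℝ Ω) (hf : ContDiffOn ℝ 1 f Ω) (hC : ∀ i, IsClosed (C i))
    (hcover : Ω ⊆ ⋃ i, C i) (hconv : ∀ i, ConvexOn ℝ (Ω ∩ C i) f) : ConvexOn ℝ Ω f := by
  refine convexOn_of_forall_convexOn_lineMap hΩc fun x _ y _ ↦ ?_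
  have hline : Continuous (AffineMap.lineMap x y : ℝ → E) := AffineMap.lineMap_continuous
  exact convexOn_real_of_isClosed_cover (hΩ.preimage hline) (hΩc.affine_preimage _)
    (hf.comp (AffineMap.contDiff_lineMap x y).contDiffOn (mapsTo_preimage _ _))
    (fun i ↦ (hC i).preimage hline) (preimage_mono hcover |>.trans (preimage_iUnion).subset)
    fun i ↦ (hconv i).comp_affineMap _

theorem piecewise_convex_C1_is_convex_general (d N : ℕ)
    (Ω : Set (EuclideanSpace ℝ (Fin d))) (hΩopen : IsOpen Ω) (hΩconv : Convex ℝ Ω)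
    (K : Fin N → Set (EuclideanSpace ℝ (Fin d)))
    (hKclosed : ∀ i, IsClosed (K i))
    (hcover : Ω ⊆ ⋃ i, K i)
    (f : EuclideanSpace ℝ (Fin d) → ℝ) (hf : ContDiffOn ℝ 1 f Ω)
    (hconv : ∀ i, ConvexOn ℝ (Ω ∩ K i) f) :
    ConvexOn ℝ Ω f :=
  convexOn_of_isClosed_cover hΩopen hΩconv hf hKclosed hcover hconv

/-- A `C¹` function on an open convex domain which is convex on each member of
a finite cover of the domain by closed convex sets is convex on the whole
domain. -/
theorem piecewise_convex_C1_is_convex (d N : ℕ) (hd : 1 ≤ d)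
    (Ω : Set (EuclideanSpace ℝ (Fin d))) (hΩopen : IsOpen Ω) (hΩconv : Convex ℝ Ω)
    (K : Fin N → Set (EuclideanSpace ℝ (Fin d)))
    (hKclosed : ∀ i, IsClosed (K i)) (hKconv : ∀ i, Convex ℝ (K i))
    (hcover : Ω ⊆ ⋃ i, K i)
    (f : EuclideanSpace ℝ (Fin d) → ℝ) (hf : ContDiffOn ℝ 1 f Ω)
    (hconv : ∀ i, ConvexOn ℝ (Ω ∩ K i) f) :
    ConvexOn ℝ Ω f :=
  piecewise_convex_C1_is_convex_general d N Ω hΩopen hΩconv K hKclosed hcover f hf hconv
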